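/- The theory CKF derives each of the following: (1) ∀t(TFt ↔ TTFt); (2) TCons: (∀φ ∈ Sent(L_T))(TFφ → ¬TTφ); (3) (∀φ,ψ ∈ Sent(L_T))(TT(φ∨ψ) ↔ TTφ ∨ TTψ); (4) (∀φ,ψ ∈ Sent(L_T))(TF(φ∨ψ) ↔ TFφ ∧ TFψ). -/

import Mathlib

/- ------------------------------------------------------------------------
Self-contained framework formalizing the setting of Castaldo & Nicolai,
"On Classical Determinate Truth": the languages `L_ℕ ⊆ L_T ⊆ L_D` (with
finitely many function symbols for elementary syntactic operations and a
canonical Gödel numbering), the Fujimoto–Halbach theory `CD⁺`, its variants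
`CD⁺↾`, `CD⁺↾cp`, `CD⁺↾sym` with a *defined* determinateness predicate, the
classical closures `CKF`, `CKFcp` of Kripke–Feferman truth, `KF + CONS` and
`CT[KF + CONS]`, the Strong Kleene jump `𝒦` and its fixed-point semantics.

Provability `Proves` is rendered as semantic consequence over arbitrary
(Type-0) structures of the language, which by Gödel completeness and
downward Löwenheim–Skolem coincides with first-order derivability.  The
arithmetical base of all theories is rendered as the set of all true
arithmetical-syntactic sentences together with the induction schema for the
full language (induction for `T` and `D` as in the paper).
------------------------------------------------------------------------ -/

namespace CDT

attribute [local instance] Classical.propDecidable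

/-- Terms of the arithmetical language `L_ℕ`, including function symbols for
the elementary syntactic operations on Gödel codes:
`num` (numeral function), `fneg`/`fand`/`fall`/`feq`/`fT`/`fD` (building codes
of negations, conjunctions, universal quantifications, equations, `T`- and
`D`-ascriptions), `fsub` (formal substitution), `tneg` (term-level composition
with `fneg`, used for the falsity predicate `F`), `uall`/`uex` (codes of
`∀t Tφ(t)` and `∃t Fφ(t)`), and `evalt` (evaluation `t ↦ t°` of closed terms). -/
inductive Term : Type
  | var   : ℕ → Term
  | zero  : Term
  | succ  : Term → Term
  | add   : Term → Term → Term
  | mul   : Term → Term → Term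
  | num   : Term → Term
  | fneg  : Term → Term
  | fand  : Term → Term → Term
  | fall  : Term → Term → Term
  | feq   : Term → Term → Term
  | fT    : Term → Term
  | fD    : Term → Term
  | fsub  : Term → Term → Term → Term
  | tneg  : Term → Term
  | uall  : Term → Term → Term
  | uex   : Term → Term → Term
  | evalt : Term → Term
  deriving DecidableEq

/-- Formulas of the language `L_D = L_ℕ ∪ {T, D}` (together with the further
Tarskian truth predicate `Tb` = `𝐓` of `CT[KF+CONS]`, and with primitive
predicate symbols for the elementary syntactic guards `Cterm`, `Sent_{L_T}`,
`Sent_{L_D}`, `Fml¹_{L_T}`, `Fml¹_{L_D}`).  `L_T`-formulas are those without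
`D` and `Tb`. -/
inductive Fml : Type
  | eq    : Term → Term → Fml
  | T     : Term → Fml
  | D     : Term → Fml
  | Tb    : Term → Fml
  | ct    : Term → Fml
  | sentT : Term → Fml
  | sentD : Term → Fml
  | fml1T : Term → Term → Fml
  | fml1D : Term → Term → Fml
  | not   : Fml → Fml
  | and   : Fml → Fml → Fml
  | all   : ℕ → Fml → Fml
  deriving DecidableEq

/-- Defined connectives (classical). -/
def Fml.imp (A B : Fml) : Fml := (A.and B.not).not
def Fml.or (A B : Fml) : Fml := (A.not.and B.not).not
def Fml.iff (A B : Fml) : Fml := (A.imp B).and (B.imp A)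
def Fml.ex (k : ℕ) (A : Fml) : Fml := (Fml.all k A.not).not

/-- Free variables of a term. -/
def Term.fv : Term → Finset ℕ
  | .var n => {n}
  | .zero => ∅
  | .succ t => t.fv
  | .add s t => s.fv ∪ t.fv
  | .mul s t => s.fv ∪ t.fv
  | .num t => t.fv
  | .fneg t => t.fv
  | .fand s t => s.fv ∪ t.fv
  | .fall s t => s.fv ∪ t.fv
  | .feq s t => s.fv ∪ t.fv
  | .fT t => t.fv
  | .fD t => t.fv
  | .fsub e s k => e.fv ∪ s.fv ∪ k.fv
  | .tneg t => t.fv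
  | .uall s t => s.fv ∪ t.fv
  | .uex s t => s.fv ∪ t.fv
  | .evalt t => t.fv

/-- Free variables of a formula. -/
def Fml.fv : Fml → Finset ℕ
  | .eq s t => s.fv ∪ t.fv
  | .T t => t.fv
  | .D t => t.fv
  | .Tb t => t.fv
  | .ct t => t.fv
  | .sentT t => t.fv
  | .sentD t => t.fv
  | .fml1T s t => s.fv ∪ t.fv
  | .fml1D s t => s.fv ∪ t.fv
  | .not A => A.fv
  | .and A B => A.fv ∪ B.fv
  | .all k A => A.fv.erase k

/-- Substitution of a term for a variable in a term. -/
def Term.subst (k : ℕ) (s : Term) : Term → Term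
  | .var n => if n = k then s else .var n
  | .zero => .zero
  | .succ t => .succ (Term.subst k s t)
  | .add t u => .add (Term.subst k s t) (Term.subst k s u)
  | .mul t u => .mul (Term.subst k s t) (Term.subst k s u)
  | .num t => .num (Term.subst k s t)
  | .fneg t => .fneg (Term.subst k s t)
  | .fand t u => .fand (Term.subst k s t) (Term.subst k s u)
  | .fall t u => .fall (Term.subst k s t) (Term.subst k s u)
  | .feq t u => .feq (Term.subst k s t) (Term.subst k s u)
  | .fT t => .fT (Term.subst k s t)
  | .fD t => .fD (Term.subst k s t)
  | .fsub e t u => .fsub (Term.subst k s e) (Term.subst k s t) (Term.subst k s u)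
  | .tneg t => .tneg (Term.subst k s t)
  | .uall t u => .uall (Term.subst k s t) (Term.subst k s u)
  | .uex t u => .uex (Term.subst k s t) (Term.subst k s u)
  | .evalt t => .evalt (Term.subst k s t)

/-- Substitution of a (closed) term for a variable in a formula. -/
def Fml.subst (k : ℕ) (s : Term) : Fml → Fml
  | .eq t u => .eq (Term.subst k s t) (Term.subst k s u)
  | .T t => .T (Term.subst k s t)
  | .D t => .D (Term.subst k s t)
  | .Tb t => .Tb (Term.subst k s t)
  | .ct t => .ct (Term.subst k s t)
  | .sentT t => .sentT (Term.subst k s t)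
  | .sentD t => .sentD (Term.subst k s t)
  | .fml1T t u => .fml1T (Term.subst k s t) (Term.subst k s u)
  | .fml1D t u => .fml1D (Term.subst k s t) (Term.subst k s u)
  | .not A => (Fml.subst k s A).not
  | .and A B => (Fml.subst k s A).and (Fml.subst k s B)
  | .all m A => if m = k then .all m A else .all m (Fml.subst k s A)

/-- The formula contains no occurrence of the truth predicate `T`. -/
def Fml.noT : Fml → Prop
  | .T _ => False
  | .not A => A.noT
  | .and A B => A.noT ∧ B.noT
  | .all _ A => A.noT
  | _ => True

/-- The formula contains no occurrence of the determinateness predicate `D`. -/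
def Fml.noD : Fml → Prop
  | .D _ => False
  | .not A => A.noD
  | .and A B => A.noD ∧ B.noD
  | .all _ A => A.noD
  | _ => True

/-- The formula contains no occurrence of the Tarskian predicate `𝐓`. -/
def Fml.noTb : Fml → Prop
  | .Tb _ => False
  | .not A => A.noTb
  | .and A B => A.noTb ∧ B.noTb
  | .all _ A => A.noTb
  | _ => True

/-- `A` is a sentence of `L_T`. -/
def IsSentT (A : Fml) : Prop := A.noD ∧ A.noTb ∧ A.fv = ∅

/-- `A` is a sentence of `L_D`. -/
def IsSentD (A : Fml) : Prop := A.noTb ∧ A.fv = ∅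

/-- The numeral of a natural number. -/
def numeral : ℕ → Term
  | 0 => .zero
  | n + 1 => .succ (numeral n)

/-- The canonical Gödel numbering of terms (injective by construction,
via the Cantor pairing function). -/
def Term.code : Term → ℕ
  | .var n => Nat.pair 1 n
  | .zero => Nat.pair 2 0
  | .succ t => Nat.pair 3 t.code
  | .add s t => Nat.pair 4 (Nat.pair s.code t.code)
  | .mul s t => Nat.pair 5 (Nat.pair s.code t.code)
  | .num t => Nat.pair 6 t.code
  | .fneg t => Nat.pair 7 t.code
  | .fand s t => Nat.pair 8 (Nat.pair s.code t.code)
  | .fall s t => Nat.pair 9 (Nat.pair s.code t.code)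
  | .feq s t => Nat.pair 10 (Nat.pair s.code t.code)
  | .fT t => Nat.pair 11 t.code
  | .fD t => Nat.pair 12 t.code
  | .fsub e s k => Nat.pair 13 (Nat.pair e.code (Nat.pair s.code k.code))
  | .tneg t => Nat.pair 14 t.code
  | .uall s t => Nat.pair 15 (Nat.pair s.code t.code)
  | .uex s t => Nat.pair 16 (Nat.pair s.code t.code)
  | .evalt t => Nat.pair 17 t.code

/-- The canonical Gödel numbering of formulas. -/
def Fml.code : Fml → ℕ
  | .eq s t => Nat.pair 101 (Nat.pair s.code t.code)
  | .T t => Nat.pair 102 t.code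
  | .D t => Nat.pair 103 t.code
  | .Tb t => Nat.pair 104 t.code
  | .ct t => Nat.pair 105 t.code
  | .sentT t => Nat.pair 106 t.code
  | .sentD t => Nat.pair 107 t.code
  | .fml1T s t => Nat.pair 108 (Nat.pair s.code t.code)
  | .fml1D s t => Nat.pair 109 (Nat.pair s.code t.code)
  | .not A => Nat.pair 110 A.code
  | .and A B => Nat.pair 111 (Nat.pair A.code B.code)
  | .all k A => Nat.pair 112 (Nat.pair k A.code)

/-- Partial decoding of terms (the partial inverse of `Term.code`). -/
noncomputable def decT (n : ℕ) : Option Term :=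
  if h : ∃ t : Term, t.code = n then some h.choose else none

/-- Partial decoding of formulas. -/
noncomputable def decF (n : ℕ) : Option Fml :=
  if h : ∃ A : Fml, A.code = n then some h.choose else none

/-! The standard interpretations of the syntactic function symbols. -/

noncomputable def opNum (n : ℕ) : ℕ := (numeral n).code
noncomputable def opFneg (n : ℕ) : ℕ :=
  match decF n with | some A => A.not.code | none => 0
noncomputable def opFand (m n : ℕ) : ℕ :=
  match decF m, decF n with | some A, some B => (A.and B).code | _, _ => 0
noncomputable def opFall (k n : ℕ) : ℕ :=
  match decF n with | some A => (Fml.all k A).code | none => 0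
noncomputable def opFeq (m n : ℕ) : ℕ :=
  match decT m, decT n with | some s, some t => (Fml.eq s t).code | _, _ => 0
noncomputable def opFT (n : ℕ) : ℕ :=
  match decT n with | some t => (Fml.T t).code | none => 0
noncomputable def opFD (n : ℕ) : ℕ :=
  match decT n with | some t => (Fml.D t).code | none => 0
noncomputable def opFsub (e m k : ℕ) : ℕ :=
  match decF e, decT m with | some A, some t => (A.subst k t).code | _, _ => 0
noncomputable def opTneg (n : ℕ) : ℕ :=
  match decT n with | some t => (Term.fneg t).code | none => 0
/-- `opUall k ⌜φ⌝` is the code of the `L_T`-sentence `∀t T(φ(t/v_k))`. -/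
noncomputable def opUall (k n : ℕ) : ℕ :=
  (Fml.all 0 ((Fml.ct (.var 0)).imp
    (Fml.T (.fsub (numeral n) (.var 0) (numeral k))))).code
/-- `opUex k ⌜φ⌝` is the code of the `L_T`-sentence `∃t F(φ(t/v_k))`. -/
noncomputable def opUex (k n : ℕ) : ℕ :=
  ((Fml.all 0 ((Fml.ct (.var 0)).imp
    (Fml.not (Fml.T (.fneg (.fsub (numeral n) (.var 0) (numeral k))))))).not).code

/-- Evaluation of terms, with the evaluation symbol `evalt` sent to `0`
(auxiliary for the standard interpretation `opEval` of `evalt`). -/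
noncomputable def Term.val0 (σ : ℕ → ℕ) : Term → ℕ
  | .var n => σ n
  | .zero => 0
  | .succ t => t.val0 σ + 1
  | .add s t => s.val0 σ + t.val0 σ
  | .mul s t => s.val0 σ * t.val0 σ
  | .num t => opNum (t.val0 σ)
  | .fneg t => opFneg (t.val0 σ)
  | .fand s t => opFand (s.val0 σ) (t.val0 σ)
  | .fall s t => opFall (s.val0 σ) (t.val0 σ)
  | .feq s t => opFeq (s.val0 σ) (t.val0 σ)
  | .fT t => opFT (t.val0 σ)
  | .fD t => opFD (t.val0 σ)
  | .fsub e s k => opFsub (e.val0 σ) (s.val0 σ) (k.val0 σ)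
  | .tneg t => opTneg (t.val0 σ)
  | .uall s t => opUall (s.val0 σ) (t.val0 σ)
  | .uex s t => opUex (s.val0 σ) (t.val0 σ)
  | .evalt _ => 0

/-- The standard interpretation of the evaluation symbol: `⌜t⌝ ↦ t°`. -/
noncomputable def opEval (n : ℕ) : ℕ :=
  match decT n with
  | some t => t.val0 (fun _ => (0 : ℕ))
  | none => 0

/-! Arithmetical (standard) interpretations of the syntactic guards. -/

def isCT (n : ℕ) : Prop := ∃ t : Term, t.code = n ∧ t.fv = ∅
def isSentTC (n : ℕ) : Prop := ∃ A : Fml, A.code = n ∧ IsSentT A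
def isSentDC (n : ℕ) : Prop := ∃ A : Fml, A.code = n ∧ IsSentD A
def isFml1TC (k n : ℕ) : Prop :=
  ∃ A : Fml, A.code = n ∧ A.noD ∧ A.noTb ∧ A.fv ⊆ {k}
def isFml1DC (k n : ℕ) : Prop :=
  ∃ A : Fml, A.code = n ∧ A.noTb ∧ A.fv ⊆ {k}

/-- First-order structures for the language (Type-0 domains suffice for
semantic consequence = provability, by completeness & Löwenheim–Skolem). -/
structure Struc where
  M : Type
  zero : M
  succ : M → M
  add : M → M → M
  mul : M → M → M
  num : M → M
  fneg : M → M
  fand : M → M → M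
  fall : M → M → M
  feq : M → M → M
  fT : M → M
  fD : M → M
  fsub : M → M → M → M
  tneg : M → M
  uall : M → M → M
  uex : M → M → M
  evalt : M → M
  T : M → Prop
  D : M → Prop
  Tb : M → Prop
  ct : M → Prop
  sentT : M → Prop
  sentD : M → Prop
  fml1T : M → M → Prop
  fml1D : M → M → Prop

/-- Evaluation of a term in a structure. -/
def Term.evalS (S : Struc) (σ : ℕ → S.M) : Term → S.M
  | .var n => σ n
  | .zero => S.zero
  | .succ t => S.succ (t.evalS S σ)
  | .add s t => S.add (s.evalS S σ) (t.evalS S σ)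
  | .mul s t => S.mul (s.evalS S σ) (t.evalS S σ)
  | .num t => S.num (t.evalS S σ)
  | .fneg t => S.fneg (t.evalS S σ)
  | .fand s t => S.fand (s.evalS S σ) (t.evalS S σ)
  | .fall s t => S.fall (s.evalS S σ) (t.evalS S σ)
  | .feq s t => S.feq (s.evalS S σ) (t.evalS S σ)
  | .fT t => S.fT (t.evalS S σ)
  | .fD t => S.fD (t.evalS S σ)
  | .fsub e s k => S.fsub (e.evalS S σ) (s.evalS S σ) (k.evalS S σ)
  | .tneg t => S.tneg (t.evalS S σ)
  | .uall s t => S.uall (s.evalS S σ) (t.evalS S σ)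
  | .uex s t => S.uex (s.evalS S σ) (t.evalS S σ)
  | .evalt t => S.evalt (t.evalS S σ)

/-- Tarskian satisfaction of a formula in a structure, under a valuation. -/
def Fml.SatS (S : Struc) : (ℕ → S.M) → Fml → Prop
  | σ, .eq s t => s.evalS S σ = t.evalS S σ
  | σ, .T t => S.T (t.evalS S σ)
  | σ, .D t => S.D (t.evalS S σ)
  | σ, .Tb t => S.Tb (t.evalS S σ)
  | σ, .ct t => S.ct (t.evalS S σ)
  | σ, .sentT t => S.sentT (t.evalS S σ)
  | σ, .sentD t => S.sentD (t.evalS S σ)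
  | σ, .fml1T s t => S.fml1T (s.evalS S σ) (t.evalS S σ)
  | σ, .fml1D s t => S.fml1D (s.evalS S σ) (t.evalS S σ)
  | σ, .not A => ¬ Fml.SatS S σ A
  | σ, .and A B => Fml.SatS S σ A ∧ Fml.SatS S σ B
  | σ, .all k A => ∀ m : S.M, Fml.SatS S (Function.update σ k m) A

/-- The standard model `(ℕ, XT, XD, XTb)`: standard arithmetic and syntax,
with `T`, `D` and `𝐓` interpreted by the given sets of codes. -/
noncomputable def stdStruc (XT XD XTb : Set ℕ) : Struc where
  M := ℕ
  zero := 0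
  succ := Nat.succ
  add := (· + ·)
  mul := (· * ·)
  num := opNum
  fneg := opFneg
  fand := opFand
  fall := opFall
  feq := opFeq
  fT := opFT
  fD := opFD
  fsub := opFsub
  tneg := opTneg
  uall := opUall
  uex := opUex
  evalt := opEval
  T := fun n => n ∈ XT
  D := fun n => n ∈ XD
  Tb := fun n => n ∈ XTb
  ct := isCT
  sentT := isSentTC
  sentD := isSentDC
  fml1T := isFml1TC
  fml1D := isFml1DC

/-- Satisfaction in the standard `L_T`-model `(ℕ, X)`. -/
def SatN (X : Set ℕ) (A : Fml) : Prop :=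
  Fml.SatS (stdStruc X ∅ ∅) (fun _ => (0 : ℕ)) A

/-- Satisfaction of all instances (closures) in the standard `L_T`-model. -/
def SatAll (X : Set ℕ) (A : Fml) : Prop :=
  ∀ σ : ℕ → ℕ, Fml.SatS (stdStruc X ∅ ∅) σ A

/-- `(ℕ, X) ⊨ Th` for an `L_T`-theory. -/
def ModelsN (X : Set ℕ) (Th : Set Fml) : Prop := ∀ A ∈ Th, SatAll X A

/-- Satisfaction in the standard `L_D`-model `(ℕ, XD, XT)` (`D` interpreted
by `XD`, `T` by `XT`). -/
def SatND (XD XT : Set ℕ) (A : Fml) : Prop :=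
  Fml.SatS (stdStruc XT XD ∅) (fun _ => (0 : ℕ)) A

/-- `(ℕ, XD, XT) ⊨ Th` for an `L_D`-theory. -/
def ModelsND (XD XT : Set ℕ) (Th : Set Fml) : Prop :=
  ∀ A ∈ Th, ∀ σ : ℕ → ℕ, Fml.SatS (stdStruc XT XD ∅) σ A

/-- Provability: semantic consequence over arbitrary structures (equivalent
to first-order derivability by Gödel's completeness theorem together with
downward Löwenheim–Skolem). -/
def Proves (Th : Set Fml) (A : Fml) : Prop :=
  ∀ (S : Struc) (σ : ℕ → S.M),
    (∀ B ∈ Th, ∀ τ : ℕ → S.M, Fml.SatS S τ B) → Fml.SatS S σ A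

/-- The evaluation `t°` of a closed term in the standard model. -/
noncomputable def tval (t : Term) : ℕ :=
  Term.evalS (stdStruc ∅ ∅ ∅) (fun _ => (0 : ℕ)) t

/-! ## The base theory: elementary syntax/arithmetic plus full induction -/

/-- The arithmetical-syntactic base: all true `L_ℕ`-sentences. -/
def BaseTh : Set Fml :=
  {A | A.noT ∧ A.noD ∧ A.noTb ∧ A.fv = ∅ ∧
    Fml.SatS (stdStruc ∅ ∅ ∅) (fun _ => (0 : ℕ)) A}

/-- Universal closure of a formula. -/
def Fml.close (A : Fml) : Fml :=
  (A.fv.sort (· ≤ ·)).foldr (fun k B => Fml.all k B) A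

/-- Induction axiom for `A` in the variable `v_k` (universally closed;
the schema is available for the full language, including `T`, `D`, `𝐓`). -/
def indAx (k : ℕ) (A : Fml) : Fml :=
  Fml.close (((A.subst k .zero).and
    (Fml.all k (A.imp (A.subst k (.succ (.var k)))))).imp (Fml.all k A))

/-- The full induction schema. -/
def IndTh : Set Fml := {B | ∃ (k : ℕ) (A : Fml), B = indAx k A}

/-! ## Abbreviations: iterated truth and falsity -/

def v0 : Term := .var 0
def v1 : Term := .var 1
def v2 : Term := .var 2
def v3 : Term := .var 3

/-- `⌜T t⌝` from `⌜t⌝`. -/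
def tmT (x : Term) : Term := .fT x
/-- `⌜F t⌝ = ⌜T(¬.t)⌝` from `⌜t⌝` (falsity as truth of the negation). -/
def tmF (x : Term) : Term := .fT (.tneg x)
/-- `TTφ`, i.e. `T⌜T(num φ)⌝`, for `φ` a sentence code. -/
def sTT (x : Term) : Fml := .T (tmT (.num x))
/-- `TFφ`, i.e. `T⌜F(num φ)⌝`, for `φ` a sentence code. -/
def sTF (x : Term) : Fml := .T (tmF (.num x))
/-- `TT t`, i.e. `T⌜T t⌝`, for `t` a closed-term code. -/
def tTT (x : Term) : Fml := .T (tmT x)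
/-- `TF t`, i.e. `T⌜F t⌝`, for `t` a closed-term code. -/
def tTF (x : Term) : Fml := .T (tmF x)

/-! ## The three definitions of determinateness -/

/-- `D x :↔ TTx ∨ TFx` (for consistent fixed points). -/
def dfCons (x : Term) : Fml := (sTT x).or (sTF x)
/-- `D x :↔ ¬TTx ∨ ¬TFx` (for complete fixed points). -/
def dfComp (x : Term) : Fml := ((sTT x).not).or ((sTF x).not)
/-- `D x :↔ (TTx ∨ TFx) ∧ (¬TTx ∨ ¬TFx)` (for symmetric fixed points). -/
def dfSym (x : Term) : Fml := (dfCons x).and (dfComp x)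

/-- `⌜D t⌝` for the primitive determinateness predicate. -/
def dcodePrim (x : Term) : Term := .fD x
/-- `⌜D t⌝` for a defined determinateness predicate `df`: the code of the
defining formula with `t` substituted for its variable. -/
noncomputable def dcodeOf (df : Term → Fml) (x : Term) : Term :=
  .fsub (numeral (df (.var 0)).code) x (numeral 0)

/-! ## The axioms of `CD⁺` (Fujimoto–Halbach), parametrized by the
determinateness predicate `df`, its code-builder `dc`, and the sentence and
formula guards `gS`, `gF` of the relevant language. -/

def axT1 : Fml :=
  .all 0 (.all 1 (((Fml.ct v0).and (Fml.ct v1)).imp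
    (Fml.iff (Fml.T (.feq v0 v1)) (.eq (.evalt v0) (.evalt v1)))))

def axT2p (df : Term → Fml) (dc : Term → Term) : Fml :=
  .all 0 ((Fml.ct v0).imp (Fml.iff (df (.evalt v0)) (Fml.T (dc v0))))

def axT3 (df : Term → Fml) : Fml :=
  .all 0 ((Fml.ct v0).imp ((df (.evalt v0)).imp
    (Fml.iff (tTT v0) (Fml.T (.evalt v0)))))

def axT4 (gS : Term → Fml) : Fml :=
  .all 0 ((gS v0).imp (Fml.iff (Fml.T (.fneg v0)) (Fml.not (Fml.T v0))))

def axT5 (gS : Term → Fml) : Fml :=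
  .all 0 (.all 1 (((gS v0).and (gS v1)).imp
    (Fml.iff (Fml.T (.fand v0 v1)) ((Fml.T v0).and (Fml.T v1)))))

def axT6 (gF : Term → Term → Fml) : Fml :=
  .all 0 (.all 1 ((gF v0 v1).imp
    (Fml.iff (Fml.T (.fall v0 v1))
      (.all 2 ((Fml.ct v2).imp (Fml.T (.fsub v1 v2 v0)))))))

def axD1 (df : Term → Fml) : Fml :=
  .all 0 (.all 1 (((Fml.ct v0).and (Fml.ct v1)).imp (df (.feq v0 v1))))

def axD2 (df : Term → Fml) : Fml :=
  .all 0 ((Fml.ct v0).imp (Fml.iff (df (tmT v0)) (df (.evalt v0))))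

def axD3 (df : Term → Fml) (dc : Term → Term) : Fml :=
  .all 0 ((Fml.ct v0).imp (Fml.iff (df (dc v0)) (df (.evalt v0))))

def axD4 (df : Term → Fml) (gS : Term → Fml) : Fml :=
  .all 0 ((gS v0).imp (Fml.iff (df (.fneg v0)) (df v0)))

def axD5 (df : Term → Fml) (gS : Term → Fml) : Fml :=
  .all 0 (.all 1 (((gS v0).and (gS v1)).imp
    (Fml.iff (df (.fand v0 v1))
      ((((df v0).and (df v1)).or ((df v0).and (Fml.T (.fneg v0)))).or
        ((df v1).and (Fml.T (.fneg v1)))))))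

def axD6 (df : Term → Fml) (gF : Term → Term → Fml) : Fml :=
  .all 0 (.all 1 ((gF v0 v1).imp
    (Fml.iff (df (.fall v0 v1))
      ((Fml.all 2 ((Fml.ct v2).imp (df (.fsub v1 v2 v0)))).or
        (Fml.ex 2 ((Fml.ct v2).and
          ((df (.fsub v1 v2 v0)).and (Fml.T (.fneg (.fsub v1 v2 v0))))))))))

def axR1 (gF : Term → Term → Fml) : Fml :=
  .all 0 (.all 1 (.all 2 (.all 3 (((gF v0 v1).and ((Fml.ct v2).and (Fml.ct v3))).imp
    ((Fml.eq (.evalt v2) (.evalt v3)).imp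
      (Fml.iff (Fml.T (.fsub v1 v2 v0)) (Fml.T (.fsub v1 v3 v0))))))))

def axR2 (df : Term → Fml) (gF : Term → Term → Fml) : Fml :=
  .all 0 (.all 1 (.all 2 (.all 3 (((gF v0 v1).and ((Fml.ct v2).and (Fml.ct v3))).imp
    ((Fml.eq (.evalt v2) (.evalt v3)).imp
      (Fml.iff (df (.fsub v1 v2 v0)) (df (.fsub v1 v3 v0))))))))

/-- The `CD⁺`-style axiom set over the base theory and full induction. -/
noncomputable def CDAx (df : Term → Fml) (dc : Term → Term)
    (gS : Term → Fml) (gF : Term → Term → Fml) : Set Fml :=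
  BaseTh ∪ IndTh ∪
    {axT1, axT2p df dc, axT3 df, axT4 gS, axT5 gS, axT6 gF,
     axD1 df, axD2 df, axD3 df dc, axD4 df gS, axD5 df gS, axD6 df gF,
     axR1 gF, axR2 df gF}

/-- Fujimoto–Halbach's `CD⁺`, with primitive `D`, in `L_D`. -/
noncomputable def CDplus : Set Fml := CDAx Fml.D dcodePrim Fml.sentD Fml.fml1D

/-- `CD⁺↾`: the axioms of `CD⁺` in `L_T` with `D x` defined as `TTx ∨ TFx`. -/
noncomputable def CDplusRes : Set Fml :=
  CDAx dfCons (dcodeOf dfCons) Fml.sentT Fml.fml1T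

/-- `CD⁺↾cp`: the axioms of `CD⁺` with `D x` defined as `¬TTx ∨ ¬TFx`. -/
noncomputable def CDplusResCp : Set Fml :=
  CDAx dfComp (dcodeOf dfComp) Fml.sentT Fml.fml1T

/-- `CD⁺↾sym`: the axioms of `CD⁺` with
`D x` defined as `(TTx ∨ TFx) ∧ (¬TTx ∨ ¬TFx)`. -/
noncomputable def CDplusResSym : Set Fml :=
  CDAx dfSym (dcodeOf dfSym) Fml.sentT Fml.fml1T

/-! ## The classical closure of Kripke–Feferman truth: `CKF` and `CKFcp` -/

def axT7 : Fml :=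
  .all 0 (.all 1 (((Fml.ct v0).and (Fml.ct v1)).imp
    (Fml.iff (sTT (.feq v0 v1)) (.eq (.evalt v0) (.evalt v1)))))

def axT8 : Fml :=
  .all 0 (.all 1 (((Fml.ct v0).and (Fml.ct v1)).imp
    (Fml.iff (sTF (.feq v0 v1)) (Fml.not (.eq (.evalt v0) (.evalt v1))))))

def axT9 : Fml :=
  .all 0 ((Fml.sentT v0).imp (Fml.iff (sTT v0) (sTT (.fneg (.fneg v0)))))

def axT10 : Fml :=
  .all 0 (.all 1 (((Fml.sentT v0).and (Fml.sentT v1)).imp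
    (Fml.iff (sTT (.fand v0 v1)) ((sTT v0).and (sTT v1)))))

def axT11 : Fml :=
  .all 0 (.all 1 (((Fml.sentT v0).and (Fml.sentT v1)).imp
    (Fml.iff (sTF (.fand v0 v1)) ((sTF v0).or (sTF v1)))))

def axT12 : Fml :=
  .all 0 (.all 1 ((Fml.fml1T v0 v1).imp
    (Fml.iff (sTT (.fall v0 v1)) (Fml.T (.uall v0 v1)))))

def axT13 : Fml :=
  .all 0 (.all 1 ((Fml.fml1T v0 v1).imp
    (Fml.iff (sTF (.fall v0 v1)) (Fml.T (.uex v0 v1)))))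

def axT14 : Fml :=
  .all 0 ((Fml.ct v0).imp (Fml.iff (sTT (tmT v0)) (tTT v0)))

def axT15 : Fml :=
  .all 0 ((Fml.ct v0).imp (Fml.iff (sTF (tmT v0)) (tTF v0)))

/-- `TDel : ∀t(TTt → Tt°)`. -/
def axTDel : Fml :=
  .all 0 ((Fml.ct v0).imp ((tTT v0).imp (Fml.T (.evalt v0))))

/-- `TRep : ∀t(Tt° → TTt)`. -/
def axTRep : Fml :=
  .all 0 ((Fml.ct v0).imp ((Fml.T (.evalt v0)).imp (tTT v0)))

/-- `CKF` without its consistency axiom `TDel`. -/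
noncomputable def CKFminus : Set Fml :=
  BaseTh ∪ IndTh ∪
    {axT1, axT4 Fml.sentT, axT5 Fml.sentT, axT6 Fml.fml1T,
     axT7, axT8, axT9, axT10, axT11, axT12, axT13, axT14, axT15,
     axR1 Fml.fml1T}

/-- The classical closure `CKF` of `KF + CONS`. -/
noncomputable def CKF : Set Fml := insert axTDel CKFminus

/-- The classical closure `CKFcp` of `KF + COMP`. -/
noncomputable def CKFcp : Set Fml := insert axTRep CKFminus

/-! ## `KF + CONS` and `CT[KF + CONS]` -/

def axKF1 : Fml :=
  .all 0 (.all 1 (((Fml.ct v0).and (Fml.ct v1)).imp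
    ((Fml.iff (Fml.T (.feq v0 v1)) (.eq (.evalt v0) (.evalt v1))).and
     (Fml.iff (Fml.T (.fneg (.feq v0 v1))) (Fml.not (.eq (.evalt v0) (.evalt v1)))))))

def axKF2 : Fml :=
  .all 0 ((Fml.ct v0).imp
    ((Fml.iff (Fml.T (tmT v0)) (Fml.T (.evalt v0))).and
     (Fml.iff (Fml.T (.fneg (tmT v0)))
       ((Fml.T (.fneg (.evalt v0))).or (Fml.not (Fml.sentT (.evalt v0)))))))

def axKF3 : Fml :=
  .all 0 ((Fml.sentT v0).imp
    (Fml.iff (Fml.T (.fneg (.fneg v0))) (Fml.T v0)))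

def axKF4 : Fml :=
  .all 0 (.all 1 (((Fml.sentT v0).and (Fml.sentT v1)).imp
    ((Fml.iff (Fml.T (.fand v0 v1)) ((Fml.T v0).and (Fml.T v1))).and
     (Fml.iff (Fml.T (.fneg (.fand v0 v1)))
       ((Fml.T (.fneg v0)).or (Fml.T (.fneg v1)))))))

def axKF5 : Fml :=
  .all 0 (.all 1 ((Fml.fml1T v0 v1).imp
    ((Fml.iff (Fml.T (.fall v0 v1))
        (.all 2 ((Fml.ct v2).imp (Fml.T (.fsub v1 v2 v0))))).and
     (Fml.iff (Fml.T (.fneg (.fall v0 (.fneg v1))))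
        (Fml.ex 2 ((Fml.ct v2).and (Fml.T (.fsub v1 v2 v0))))))))

/-- `CONS : ∀φ(Fφ → ¬Tφ)`. -/
def axCons : Fml :=
  .all 0 ((Fml.sentT v0).imp ((Fml.T (.fneg v0)).imp (Fml.not (Fml.T v0))))

/-- `COMP : ∀φ(¬Tφ → Fφ)`. -/
def axComp : Fml :=
  .all 0 ((Fml.sentT v0).imp ((Fml.not (Fml.T v0)).imp (Fml.T (.fneg v0))))

noncomputable def KFCONS : Set Fml :=
  BaseTh ∪ IndTh ∪ {axKF1, axKF2, axKF3, axKF4, axKF5, axCons}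

def axTb1 : Fml :=
  .all 0 (.all 1 (((Fml.ct v0).and (Fml.ct v1)).imp
    (Fml.iff (Fml.Tb (.feq v0 v1)) (.eq (.evalt v0) (.evalt v1)))))

def axTb1b : Fml :=
  .all 0 ((Fml.ct v0).imp (Fml.iff (Fml.Tb (tmT v0)) (Fml.T (.evalt v0))))

def axTb2 : Fml :=
  .all 0 ((Fml.sentT v0).imp
    (Fml.iff (Fml.Tb (.fneg v0)) (Fml.not (Fml.Tb v0))))

def axTb3 : Fml :=
  .all 0 (.all 1 (((Fml.sentT v0).and (Fml.sentT v1)).imp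
    (Fml.iff (Fml.Tb (.fand v0 v1)) ((Fml.Tb v0).and (Fml.Tb v1)))))

def axTb4 : Fml :=
  .all 0 (.all 1 ((Fml.fml1T v0 v1).imp
    (Fml.iff (Fml.Tb (.fall v0 v1))
      (.all 2 ((Fml.ct v2).imp (Fml.Tb (.fsub v1 v2 v0)))))))

/-- `CT[KF + CONS]`: `KF + CONS` with a Tarskian truth predicate `𝐓` on top. -/
noncomputable def CTKFC : Set Fml :=
  KFCONS ∪ {axTb1, axTb1b, axTb2, axTb3, axTb4}

/-! ## The Strong Kleene jump and its fixed points -/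

/-- The Strong Kleene jump `𝒦` on sets of codes of `L_T`-sentences. -/
noncomputable def K (X : Set ℕ) : Set ℕ :=
  {n | isSentTC n ∧ (
    (∃ s t : Term, s.fv = ∅ ∧ t.fv = ∅ ∧ n = (Fml.eq s t).code ∧ tval s = tval t) ∨
    (∃ s t : Term, s.fv = ∅ ∧ t.fv = ∅ ∧ n = (Fml.eq s t).not.code ∧ tval s ≠ tval t) ∨
    (∃ t : Term, t.fv = ∅ ∧ n = (Fml.T t).code ∧ tval t ∈ X) ∨
    (∃ t : Term, t.fv = ∅ ∧ n = (Fml.T t).not.code ∧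
      (opFneg (tval t) ∈ X ∨ ¬ isSentTC (tval t))) ∨
    (∃ t : Term, t.fv = ∅ ∧ n = (Fml.ct t).code ∧ isCT (tval t)) ∨
    (∃ t : Term, t.fv = ∅ ∧ n = (Fml.ct t).not.code ∧ ¬ isCT (tval t)) ∨
    (∃ t : Term, t.fv = ∅ ∧ n = (Fml.sentT t).code ∧ isSentTC (tval t)) ∨
    (∃ t : Term, t.fv = ∅ ∧ n = (Fml.sentT t).not.code ∧ ¬ isSentTC (tval t)) ∨
    (∃ t : Term, t.fv = ∅ ∧ n = (Fml.sentD t).code ∧ isSentDC (tval t)) ∨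
    (∃ t : Term, t.fv = ∅ ∧ n = (Fml.sentD t).not.code ∧ ¬ isSentDC (tval t)) ∨
    (∃ s t : Term, s.fv = ∅ ∧ t.fv = ∅ ∧ n = (Fml.fml1T s t).code ∧
      isFml1TC (tval s) (tval t)) ∨
    (∃ s t : Term, s.fv = ∅ ∧ t.fv = ∅ ∧ n = (Fml.fml1T s t).not.code ∧
      ¬ isFml1TC (tval s) (tval t)) ∨
    (∃ s t : Term, s.fv = ∅ ∧ t.fv = ∅ ∧ n = (Fml.fml1D s t).code ∧
      isFml1DC (tval s) (tval t)) ∨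
    (∃ s t : Term, s.fv = ∅ ∧ t.fv = ∅ ∧ n = (Fml.fml1D s t).not.code ∧
      ¬ isFml1DC (tval s) (tval t)) ∨
    (∃ A : Fml, n = A.not.not.code ∧ A.code ∈ X) ∨
    (∃ A B : Fml, n = (A.and B).code ∧ A.code ∈ X ∧ B.code ∈ X) ∨
    (∃ A B : Fml, n = (A.and B).not.code ∧ (A.not.code ∈ X ∨ B.not.code ∈ X)) ∨
    (∃ (k : ℕ) (A : Fml), n = (Fml.all k A).code ∧
      ∀ t : Term, t.fv = ∅ → (A.subst k t).code ∈ X) ∨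
    (∃ (k : ℕ) (A : Fml), n = (Fml.all k A).not.code ∧
      ∃ t : Term, t.fv = ∅ ∧ (A.subst k t).not.code ∈ X))}

/-- `X` is a fixed point of the Strong Kleene jump. -/
noncomputable def IsFP (X : Set ℕ) : Prop := K X = X

/-- `X` is consistent: no sentence is in `X` together with its negation. -/
def ConsistentS (X : Set ℕ) : Prop :=
  ∀ A : Fml, ¬ (A.code ∈ X ∧ A.not.code ∈ X)

/-- `X` is complete: every `L_T`-sentence or its negation is in `X`. -/
def CompleteS (X : Set ℕ) : Prop :=
  ∀ A : Fml, IsSentT A → (A.code ∈ X ∨ A.not.code ∈ X)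

/-- `𝕋_X`: the set of (codes of) `L_T`-sentences true in `(ℕ, X)` — the
classical closure of `X`. -/
def TrueSet (X : Set ℕ) : Set ℕ :=
  {n | ∃ A : Fml, A.code = n ∧ IsSentT A ∧ SatN X A}

/-- The inner extension `S^𝒮 = {A : (ℕ, S) ⊨ T⌜T⌜A⌝⌝}`. -/
def SI (S : Set ℕ) : Set ℕ :=
  {n | ∃ A : Fml, A.code = n ∧ IsSentT A ∧
    SatN S (Fml.T (numeral ((Fml.T (numeral A.code)).code)))}

/-! ## The Fujimoto–Halbach model construction for `CD⁺` -/

/-- The positive inductive operator `Γ_Y(X)` associated with the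
(right-to-left directions of) the determinateness axioms `D1`–`D6`. -/
noncomputable def Gamma (Y X : Set ℕ) : Set ℕ :=
  {n | isSentDC n ∧ (
    (∃ s t : Term, s.fv = ∅ ∧ t.fv = ∅ ∧ n = (Fml.eq s t).code) ∨
    (∃ t : Term, t.fv = ∅ ∧ n = (Fml.T t).code ∧ tval t ∈ X) ∨
    (∃ t : Term, t.fv = ∅ ∧ n = (Fml.D t).code ∧ tval t ∈ X) ∨
    (∃ A : Fml, n = A.not.code ∧ A.code ∈ X) ∨
    (∃ A B : Fml, n = (A.and B).code ∧
      ((A.code ∈ X ∧ B.code ∈ X) ∨ (A.code ∈ X ∧ A.not.code ∈ Y) ∨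
        (B.code ∈ X ∧ B.not.code ∈ Y))) ∨
    (∃ (k : ℕ) (A : Fml), n = (Fml.all k A).code ∧
      ((∀ t : Term, t.fv = ∅ → (A.subst k t).code ∈ X) ∨
        (∃ t : Term, t.fv = ∅ ∧ (A.subst k t).code ∈ X ∧
          (A.subst k t).not.code ∈ Y))))}

/-- The set of codes of `L_D`-sentences true in `(ℕ, XD, XT)`. -/
def TrueSetD (XD XT : Set ℕ) : Set ℕ :=
  {n | ∃ A : Fml, A.code = n ∧ IsSentD A ∧ SatND XD XT A}

/-- The Fujimoto–Halbach simultaneous transfinite recursion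
`(D_α, T_α)` (Def. on p. `semcdp` of the paper). -/
noncomputable def FH : Ordinal.{0} → Set ℕ × Set ℕ := fun α =>
  Ordinal.limitRecOn α (∅, ∅)
    (fun _ p => (Gamma p.2 p.1, TrueSetD p.1 p.2))
    (fun β _ ih =>
      ({n | ∃ (γ : Ordinal) (h : γ < β), n ∈ (ih γ h).1},
       {n | ∃ (γ : Ordinal) (h : γ < β), n ∈ (ih γ h).1 ∩ (ih γ h).2}))

/-- `D∞ = D_{ω₁}`. -/
noncomputable def DInf : Set ℕ := (FH (Cardinal.aleph 1).ord).1
/-- `T∞ = T_{ω₁}`. -/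
noncomputable def TInf : Set ℕ := (FH (Cardinal.aleph 1).ord).2

/-! ## `L_ℕ`-translations and the dual translation -/

/-- An `L_ℕ`-translation: it does not relativize quantifiers, commutes with
the logical operations, and is the identity on the arithmetical-syntactic
vocabulary (only the atoms `T`, `D`, `𝐓` may be re-interpreted). -/
structure LNTrans where
  d : Fml → Fml
  map_eq : ∀ s t, d (Fml.eq s t) = Fml.eq s t
  map_ct : ∀ t, d (Fml.ct t) = Fml.ct t
  map_sentT : ∀ t, d (Fml.sentT t) = Fml.sentT t
  map_sentD : ∀ t, d (Fml.sentD t) = Fml.sentD t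
  map_fml1T : ∀ s t, d (Fml.fml1T s t) = Fml.fml1T s t
  map_fml1D : ∀ s t, d (Fml.fml1D s t) = Fml.fml1D s t
  map_not : ∀ A, d A.not = (d A).not
  map_and : ∀ A B, d (A.and B) = (d A).and (d B)
  map_all : ∀ k A, d (Fml.all k A) = Fml.all k (d A)

/-- `Th₂` `L_ℕ`-interprets `Th₁`. -/
def LNInterp (Th₁ Th₂ : Set Fml) : Prop :=
  ∃ τ : LNTrans, ∀ A : Fml, Proves Th₁ A → Proves Th₂ (τ.d A)

/-- Mutual `L_ℕ`-interpretability. -/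
def MutualLNInterp (Th₁ Th₂ : Set Fml) : Prop :=
  LNInterp Th₁ Th₂ ∧ LNInterp Th₂ Th₁

/-- Cantini's dual translation `c`: it preserves the arithmetical vocabulary,
commutes with the logical operations, and maps `T x` to `¬F x`. -/
def Fml.dual : Fml → Fml
  | .eq s t => .eq s t
  | .T t => (Fml.T (.fneg t)).not
  | .D t => .D t
  | .Tb t => .Tb t
  | .ct t => .ct t
  | .sentT t => .sentT t
  | .sentD t => .sentD t
  | .fml1T s t => .fml1T s t
  | .fml1D s t => .fml1D s t
  | .not A => A.dual.not
  | .and A B => A.dual.and B.dual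
  | .all k A => .all k A.dual


/-- `⌜φ ∨ ψ⌝` from `⌜φ⌝`, `⌜ψ⌝` (disjunction defined classically). -/
def orCode (x y : Term) : Term := Term.fneg (Term.fand (Term.fneg x) (Term.fneg y))


/-! The proof works in an arbitrary model of `CKF`. Regularity `R1`, applied to the formula
`T v₀`, lets one exchange `⌜F⌜φ⌝⌝` for `⌜T⌜¬φ⌝⌝` under `T`, since both terms denote codes of
closed terms with the same value; so `TFφ ↔ TT¬φ`. With this exchange the inner Strong Kleene
clauses `T9`–`T11` yield the clauses for disjunction, and `T14` applied to `⌜¬.t⌝` is `(1)`.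
For `TCons`, `TDel` turns `TTφ ∧ TFφ` into `Tφ ∧ T¬φ`, which contradicts `T4`. -/

theorem Term.code_injective : Function.Injective Term.code := by
  intro s
  induction s <;> intro t h <;> cases t <;>
    simp_all [Term.code, Nat.pair_eq_pair] <;> aesop

theorem Fml.code_injective : Function.Injective Fml.code := by
  intro A
  induction A <;> intro B h <;> cases B <;>
    simp_all [Fml.code, Nat.pair_eq_pair, Term.code_injective.eq_iff] <;> aesop

theorem decT_code (t : Term) : decT t.code = some t := by
  have h : ∃ s : Term, s.code = t.code := ⟨t, rfl⟩
  rw [decT, dif_pos h, Term.code_injective h.choose_spec]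

theorem decF_code (A : Fml) : decF A.code = some A := by
  have h : ∃ B : Fml, B.code = A.code := ⟨A, rfl⟩
  rw [decF, dif_pos h, Fml.code_injective h.choose_spec]

theorem numeral_fv (n : ℕ) : (numeral n).fv = ∅ := by
  induction n <;> simp_all [numeral, Term.fv]

theorem numeral_val0 (σ : ℕ → ℕ) (n : ℕ) : (numeral n).val0 σ = n := by
  induction n <;> simp_all [numeral, Term.val0]

theorem opFneg_code (A : Fml) : opFneg A.code = A.not.code := by
  simp [opFneg, decF_code]

theorem opFand_code (A B : Fml) : opFand A.code B.code = (A.and B).code := by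
  simp [opFand, decF_code]

theorem opTneg_code (t : Term) : opTneg t.code = (Term.fneg t).code := by
  simp [opTneg, decT_code]

theorem opFsub_code_T_var (t : Term) :
    opFsub (Fml.T (.var 0)).code t.code 0 = opFT t.code := by
  simp [opFsub, opFT, decF_code, decT_code, Fml.subst, Term.subst]

theorem opEval_code (t : Term) : opEval t.code = t.val0 (fun _ => 0) := by
  simp [opEval, decT_code]

theorem opEval_opNum (n : ℕ) : opEval (opNum n) = n := by
  simp [opNum, opEval_code, numeral_val0]

theorem opEval_opTneg_opNum (n : ℕ) : opEval (opTneg (opNum n)) = opFneg n := by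
  simp [opNum, opTneg_code, opEval_code, Term.val0, numeral_val0]

theorem isCT_opNum (n : ℕ) : isCT (opNum n) := ⟨numeral n, rfl, numeral_fv n⟩

theorem isCT.opTneg {n : ℕ} (h : isCT n) : isCT (opTneg n) := by
  obtain ⟨t, rfl, hfv⟩ := h
  exact ⟨.fneg t, (opTneg_code t).symm, hfv⟩

theorem isSentTC.opFneg {n : ℕ} (h : isSentTC n) : isSentTC (opFneg n) := by
  obtain ⟨A, rfl, hA⟩ := h
  exact ⟨A.not, (opFneg_code A).symm, hA⟩

theorem isSentTC.opFand {m n : ℕ} (hm : isSentTC m) (hn : isSentTC n) :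
    isSentTC (opFand m n) := by
  obtain ⟨A, rfl, hAD, hATb, hAfv⟩ := hm
  obtain ⟨B, rfl, hBD, hBTb, hBfv⟩ := hn
  refine ⟨A.and B, (opFand_code A B).symm, ⟨hAD, hBD⟩, ⟨hATb, hBTb⟩, ?_⟩
  simp [Fml.fv, hAfv, hBfv]

theorem isFml1TC_T_var : isFml1TC 0 (Fml.T (.var 0)).code :=
  ⟨.T (.var 0), rfl, trivial, trivial, by simp [Fml.fv, Term.fv]⟩

section Semantics

variable {S : Struc} {σ : ℕ → S.M} {A B : Fml}

theorem Fml.satS_imp : Fml.SatS S σ (A.imp B) ↔ (Fml.SatS S σ A → Fml.SatS S σ B) := by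
  simp only [Fml.imp, Fml.SatS]; tauto

theorem Fml.satS_or : Fml.SatS S σ (A.or B) ↔ (Fml.SatS S σ A ∨ Fml.SatS S σ B) := by
  simp only [Fml.or, Fml.SatS]; tauto

theorem Fml.satS_iff : Fml.SatS S σ (A.iff B) ↔ (Fml.SatS S σ A ↔ Fml.SatS S σ B) := by
  simp only [Fml.iff, Fml.SatS, Fml.satS_imp]; tauto

end Semantics

def Struc.Sat (S : Struc) (A : Fml) : Prop := ∀ τ : ℕ → S.M, Fml.SatS S τ A

def Struc.Models (S : Struc) (Th : Set Fml) : Prop := ∀ A ∈ Th, S.Sat A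

theorem Struc.Models.mono {S : Struc} {Th Th' : Set Fml} (H : S.Models Th') (h : Th ⊆ Th') :
    S.Models Th :=
  fun A hA => H A (h hA)

namespace Struc.Models

variable {S : Struc}

theorem ct_num (H : S.Models BaseTh) (a : S.M) : S.ct (S.num a) := by
  have h : ∀ a, S.ct (S.num a) := by
    simpa [Fml.SatS, Term.evalS, v0] using H (.all 0 (.ct (.num v0)))
      ⟨by simp [Fml.noT], by simp [Fml.noD], by simp [Fml.noTb],
        by simp [Fml.fv, Term.fv, v0], fun m => isCT_opNum m⟩ (fun _ => a)
  exact h a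

theorem ct_tneg (H : S.Models BaseTh) {a : S.M} (ha : S.ct a) : S.ct (S.tneg a) := by
  have h : ∀ a, S.ct a → S.ct (S.tneg a) := by
    simpa [Fml.SatS, Fml.satS_imp, Term.evalS, v0]
      using H (.all 0 ((Fml.ct v0).imp (Fml.ct (.tneg v0))))
        ⟨by simp [Fml.noT, Fml.imp], by simp [Fml.noD, Fml.imp], by simp [Fml.noTb, Fml.imp],
          by simp [Fml.fv, Term.fv, v0, Fml.imp], fun m => Fml.satS_imp.2 isCT.opTneg⟩
        (fun _ => a)
  exact h a ha

theorem evalt_num (H : S.Models BaseTh) (a : S.M) : S.evalt (S.num a) = a := by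
  have h : ∀ a, S.evalt (S.num a) = a := by
    simpa [Fml.SatS, Term.evalS, v0] using H (.all 0 (.eq (.evalt (.num v0)) v0))
      ⟨by simp [Fml.noT], by simp [Fml.noD], by simp [Fml.noTb],
        by simp [Fml.fv, Term.fv, v0], fun m => opEval_opNum m⟩ (fun _ => a)
  exact h a

theorem evalt_tneg_num (H : S.Models BaseTh) (a : S.M) :
    S.evalt (S.tneg (S.num a)) = S.fneg a := by
  have h : ∀ a, S.evalt (S.tneg (S.num a)) = S.fneg a := by
    simpa [Fml.SatS, Term.evalS, v0] using H (.all 0 (.eq (.evalt (.tneg (.num v0))) (.fneg v0)))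
      ⟨by simp [Fml.noT], by simp [Fml.noD], by simp [Fml.noTb],
        by simp [Fml.fv, Term.fv, v0], fun m => opEval_opTneg_opNum m⟩ (fun _ => a)
  exact h a

theorem sentT_fneg (H : S.Models BaseTh) {a : S.M} (ha : S.sentT a) : S.sentT (S.fneg a) := by
  have h : ∀ a, S.sentT a → S.sentT (S.fneg a) := by
    simpa [Fml.SatS, Fml.satS_imp, Term.evalS, v0]
      using H (.all 0 ((Fml.sentT v0).imp (Fml.sentT (.fneg v0))))
        ⟨by simp [Fml.noT, Fml.imp], by simp [Fml.noD, Fml.imp], by simp [Fml.noTb, Fml.imp],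
          by simp [Fml.fv, Term.fv, v0, Fml.imp], fun m => Fml.satS_imp.2 isSentTC.opFneg⟩
        (fun _ => a)
  exact h a ha

theorem sentT_fand (H : S.Models BaseTh) {a b : S.M} (ha : S.sentT a) (hb : S.sentT b) :
    S.sentT (S.fand a b) := by
  have h : ∀ a b, S.sentT a → S.sentT b → S.sentT (S.fand a b) := by
    simpa [Fml.SatS, Fml.satS_imp, Term.evalS, v0, v1, Function.update_apply]
      using H (.all 0 (.all 1 (((Fml.sentT v0).and (Fml.sentT v1)).imp
        (Fml.sentT (.fand v0 v1)))))
        ⟨by simp [Fml.noT, Fml.imp], by simp [Fml.noD, Fml.imp], by simp [Fml.noTb, Fml.imp],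
          by ext; simp [Fml.fv, Term.fv, v0, v1, Fml.imp]; omega,
          fun m m' => Fml.satS_imp.2 fun h => isSentTC.opFand h.1 h.2⟩ (fun _ => a)
  exact h a b ha hb

/-- Witnessed by the code of `T v₀`: this is how `R1` reaches formulas `T ⌜T t⌝`. -/
theorem exists_fml1T_fsub_eq_fT (H : S.Models BaseTh) :
    ∃ f k : S.M, S.fml1T k f ∧ ∀ c, S.ct c → S.fsub f c k = S.fT c := by
  simpa [Fml.SatS, Fml.satS_imp, Fml.ex, Term.evalS, v0, v1, v2, Function.update_apply]
    using H (.ex 1 (.ex 0 ((Fml.fml1T v0 v1).and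
      (.all 2 ((Fml.ct v2).imp (Fml.eq (.fsub v1 v2 v0) (.fT v2)))))))
    ⟨by simp [Fml.noT, Fml.imp, Fml.ex], by simp [Fml.noD, Fml.imp, Fml.ex],
      by simp [Fml.noTb, Fml.imp, Fml.ex],
      by ext; simp [Fml.fv, Term.fv, v0, v1, v2, Fml.ex, Fml.imp]; omega, by
      simp only [Fml.ex, Fml.SatS, Fml.satS_imp, not_forall, not_not]
      refine ⟨(Fml.T (.var 0)).code, (0 : ℕ), isFml1TC_T_var, fun c ⟨t, ht, _⟩ => ?_⟩
      subst ht
      exact opFsub_code_T_var t⟩ (fun _ => S.zero)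

end Struc.Models

def Struc.TT (S : Struc) (a : S.M) : Prop := S.T (S.fT (S.num a))

def Struc.TF (S : Struc) (a : S.M) : Prop := S.T (S.fT (S.tneg (S.num a)))

namespace Struc

variable {S : Struc} {a b : S.M}

theorem T_fneg_iff (h : S.Sat (axT4 Fml.sentT)) (ha : S.sentT a) :
    S.T (S.fneg a) ↔ ¬ S.T a := by
  have h' : ∀ a, S.sentT a → (S.T (S.fneg a) ↔ ¬ S.T a) := by
    simpa [axT4, Fml.SatS, Fml.satS_imp, Fml.satS_iff, Term.evalS, v0] using h fun _ => a
  exact h' a ha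

theorem TT_fneg_fneg_iff (h : S.Sat axT9) (ha : S.sentT a) :
    S.TT (S.fneg (S.fneg a)) ↔ S.TT a := by
  have h' : ∀ a, S.sentT a → (S.TT a ↔ S.TT (S.fneg (S.fneg a))) := by
    simpa [axT9, sTT, tmT, TT, Fml.SatS, Fml.satS_imp, Fml.satS_iff, Term.evalS, v0]
      using h fun _ => a
  exact (h' a ha).symm

theorem TT_fand_iff (h : S.Sat axT10) (ha : S.sentT a) (hb : S.sentT b) :
    S.TT (S.fand a b) ↔ S.TT a ∧ S.TT b := by
  have h' : ∀ a b, S.sentT a → S.sentT b → (S.TT (S.fand a b) ↔ S.TT a ∧ S.TT b) := by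
    simpa [axT10, sTT, tmT, TT, Fml.SatS, Fml.satS_imp, Fml.satS_iff, Term.evalS, v0, v1,
      Function.update_apply] using h fun _ => a
  exact h' a b ha hb

theorem TF_fand_iff (h : S.Sat axT11) (ha : S.sentT a) (hb : S.sentT b) :
    S.TF (S.fand a b) ↔ S.TF a ∨ S.TF b := by
  have h' : ∀ a b, S.sentT a → S.sentT b → (S.TF (S.fand a b) ↔ S.TF a ∨ S.TF b) := by
    simpa [axT11, sTF, tmF, TF, Fml.SatS, Fml.satS_imp, Fml.satS_iff, Fml.satS_or, Term.evalS,
      v0, v1, Function.update_apply] using h fun _ => a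
  exact h' a b ha hb

theorem TT_fT_iff (h : S.Sat axT14) (ha : S.ct a) : S.TT (S.fT a) ↔ S.T (S.fT a) := by
  have h' : ∀ a, S.ct a → (S.TT (S.fT a) ↔ S.T (S.fT a)) := by
    simpa [axT14, sTT, tTT, tmT, TT, Fml.SatS, Fml.satS_imp, Fml.satS_iff, Term.evalS, v0]
      using h fun _ => a
  exact h' a ha

theorem T_evalt_of_T_fT (h : S.Sat axTDel) (ha : S.ct a) (hTT : S.T (S.fT a)) :
    S.T (S.evalt a) := by
  have h' : ∀ a, S.ct a → S.T (S.fT a) → S.T (S.evalt a) := by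
    simpa [axTDel, tTT, tmT, Fml.SatS, Fml.satS_imp, Term.evalS, v0] using h fun _ => a
  exact h' a ha hTT

theorem T_fT_congr (h : S.Sat (axR1 Fml.fml1T)) (H : S.Models BaseTh) (ha : S.ct a)
    (hb : S.ct b) (hab : S.evalt a = S.evalt b) : S.T (S.fT a) ↔ S.T (S.fT b) := by
  have h' : ∀ k f a b, S.fml1T k f → S.ct a → S.ct b → S.evalt a = S.evalt b →
      (S.T (S.fsub f a k) ↔ S.T (S.fsub f b k)) := by
    simpa [axR1, Fml.SatS, Fml.satS_imp, Fml.satS_iff, Term.evalS, v0, v1, v2, v3,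
      Function.update_apply] using h fun _ => a
  obtain ⟨f, k, hf, hsub⟩ := H.exists_fml1T_fsub_eq_fT
  rw [← hsub a ha, ← hsub b hb]
  exact h' k f a b hf ha hb hab

/-- `⌜F⌜φ⌝⌝` and `⌜T⌜¬φ⌝⌝` are codes of closed terms with the same value `⌜¬φ⌝`. -/
theorem TF_iff_TT_fneg (h : S.Sat (axR1 Fml.fml1T)) (H : S.Models BaseTh) (a : S.M) :
    S.TF a ↔ S.TT (S.fneg a) :=
  T_fT_congr h H (H.ct_tneg (H.ct_num a)) (H.ct_num _)
    (by rw [H.evalt_tneg_num, H.evalt_num])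

theorem T_of_TT (h : S.Sat axTDel) (H : S.Models BaseTh) (hTT : S.TT a) : S.T a :=
  H.evalt_num a ▸ T_evalt_of_T_fT h (H.ct_num a) hTT

theorem T_fneg_of_TF (h : S.Sat axTDel) (H : S.Models BaseTh) (hTF : S.TF a) :
    S.T (S.fneg a) :=
  H.evalt_tneg_num a ▸ T_evalt_of_T_fT h (H.ct_tneg (H.ct_num a)) hTF

end Struc

theorem BaseTh_subset_CKFminus : BaseTh ⊆ CKFminus :=
  Set.subset_union_left.trans Set.subset_union_left

theorem CKFminus_subset_CKF : CKFminus ⊆ CKF :=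
  Set.subset_insert _ _

namespace Struc.Models

variable {S : Struc} {a b : S.M}

theorem TT_fT_tneg_iff (H : S.Models CKFminus) (ha : S.ct a) :
    S.TT (S.fT (S.tneg a)) ↔ S.T (S.fT (S.tneg a)) :=
  TT_fT_iff (H _ (by simp [CKFminus])) ((H.mono BaseTh_subset_CKFminus).ct_tneg ha)

theorem TT_or_iff (H : S.Models CKFminus) (ha : S.sentT a) (hb : S.sentT b) :
    S.TT (S.fneg (S.fand (S.fneg a) (S.fneg b))) ↔ S.TT a ∨ S.TT b := by
  have HB := H.mono BaseTh_subset_CKFminus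
  have hR1 : S.Sat (axR1 Fml.fml1T) := H _ (by simp [CKFminus])
  have hT9 : S.Sat axT9 := H _ (by simp [CKFminus])
  rw [← TF_iff_TT_fneg hR1 HB,
    TF_fand_iff (H _ (by simp [CKFminus])) (HB.sentT_fneg ha) (HB.sentT_fneg hb),
    TF_iff_TT_fneg hR1 HB, TF_iff_TT_fneg hR1 HB,
    TT_fneg_fneg_iff hT9 ha, TT_fneg_fneg_iff hT9 hb]

theorem TF_or_iff (H : S.Models CKFminus) (ha : S.sentT a) (hb : S.sentT b) :
    S.TF (S.fneg (S.fand (S.fneg a) (S.fneg b))) ↔ S.TF a ∧ S.TF b := by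
  have HB := H.mono BaseTh_subset_CKFminus
  have hR1 : S.Sat (axR1 Fml.fml1T) := H _ (by simp [CKFminus])
  have hfand := HB.sentT_fand (HB.sentT_fneg ha) (HB.sentT_fneg hb)
  rw [TF_iff_TT_fneg hR1 HB, TT_fneg_fneg_iff (H _ (by simp [CKFminus])) hfand,
    TT_fand_iff (H _ (by simp [CKFminus])) (HB.sentT_fneg ha) (HB.sentT_fneg hb),
    ← TF_iff_TT_fneg hR1 HB, ← TF_iff_TT_fneg hR1 HB]

theorem not_TT_of_TF (H : S.Models CKF) (ha : S.sentT a) (hTF : S.TF a) : ¬ S.TT a := by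
  have HB := H.mono (BaseTh_subset_CKFminus.trans CKFminus_subset_CKF)
  have hDel : S.Sat axTDel := H _ (Set.mem_insert _ _)
  exact fun hTT => (T_fneg_iff (H _ (by simp [CKF, CKFminus])) ha).1
    (T_fneg_of_TF hDel HB hTF) (T_of_TT hDel HB hTT)

end Struc.Models

/-- `CKF` derives: (1) `∀t(TFt ↔ TTFt)`;
(2) `TCons: (∀φ ∈ Sent(L_T))(TFφ → ¬TTφ)`;
(3) `(∀φ,ψ ∈ Sent(L_T))(TT(φ∨ψ) ↔ TTφ ∨ TTψ)`;
(4) `(∀φ,ψ ∈ Sent(L_T))(TF(φ∨ψ) ↔ TFφ ∧ TFψ)`. -/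
theorem ckf_basic_theorems :
    Proves CKF (Fml.all 0 ((Fml.ct v0).imp
      (Fml.iff (tTF v0) (sTT (tmF v0))))) ∧
    Proves CKF (Fml.all 0 ((Fml.sentT v0).imp
      ((sTF v0).imp (Fml.not (sTT v0))))) ∧
    Proves CKF (Fml.all 0 (Fml.all 1 (((Fml.sentT v0).and (Fml.sentT v1)).imp
      (Fml.iff (sTT (orCode v0 v1)) ((sTT v0).or (sTT v1)))))) ∧
    Proves CKF (Fml.all 0 (Fml.all 1 (((Fml.sentT v0).and (Fml.sentT v1)).imp
      (Fml.iff (sTF (orCode v0 v1)) ((sTF v0).and (sTF v1)))))) := by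
  refine ⟨?_, ?_, ?_, ?_⟩ <;> intro S _ (H : S.Models CKF) <;>
    simp only [Fml.SatS, Fml.satS_imp, Fml.satS_iff, Fml.satS_or]
  · exact fun _ ha => ((H.mono CKFminus_subset_CKF).TT_fT_tneg_iff ha).symm
  · exact fun _ => H.not_TT_of_TF
  · exact fun _ _ h => (H.mono CKFminus_subset_CKF).TT_or_iff h.1 h.2
  · exact fun _ _ h => (H.mono CKFminus_subset_CKF).TF_or_iff h.1 h.2

end CDT
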